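/- Let p ≥ q ≥ 1 be integers and n = p+q. Let g ∈ M_n(ℂ) satisfy g* I_{p,q} g = I_{p,q}, with block decomposition g = [[A,B],[C,D]] where A ∈ M_p(ℂ), B ∈ M_{p,q}(ℂ), C ∈ M_{q,p}(ℂ), D ∈ M_q(ℂ). Then for every z ∈ Ω = {z ∈ M_{p,q}(ℂ) : I_q − z*z is positive definite}, the matrix Cz + D is invertible, the matrix w = (Az+B)(Cz+D)^{−1} satisfies I_q − w*w = ((Cz+D)*)^{−1} (I_q − z*z) (Cz+D)^{−1}, and w ∈ Ω. -/

import Mathlib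

open Matrix
open scoped ComplexOrder

/-- The matrix `I_{p,q} = diag(I_p, −I_q)`. -/
def stmt14.Ipq (p q : ℕ) : Matrix (Fin p ⊕ Fin q) (Fin p ⊕ Fin q) ℂ :=
  Matrix.fromBlocks 1 0 0 (-1)

private lemma posDef_conj_aux {m : ℕ} {P B : Matrix (Fin m) (Fin m) ℂ}
    (hP : P.PosDef) (hB : IsUnit B) : (Bᴴ * P * B).PosDef := by
  refine Matrix.PosDef.of_dotProduct_mulVec_pos (Matrix.isHermitian_conjTranspose_mul_mul B hP.1) fun x hx => ?_
  have hBx : B *ᵥ x ≠ 0 :=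
    (Matrix.mulVec_injective_iff_isUnit.mpr hB |>.ne_iff' (Matrix.mulVec_zero B)).2 hx
  simpa only [star_mulVec, dotProduct_mulVec, vecMul_vecMul] using hP.dotProduct_mulVec_pos hBx

private lemma expand_aux {p q : ℕ}
    (A : Matrix (Fin p) (Fin p) ℂ) (B : Matrix (Fin p) (Fin q) ℂ)
    (C : Matrix (Fin q) (Fin p) ℂ) (D : Matrix (Fin q) (Fin q) ℂ)
    (z : Matrix (Fin p) (Fin q) ℂ) :
    (C * z + D)ᴴ * (C * z + D) - (A * z + B)ᴴ * (A * z + B) =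
      zᴴ * ((Cᴴ * C - Aᴴ * A) * z) + zᴴ * (Cᴴ * D - Aᴴ * B) +
        (Dᴴ * C - Bᴴ * A) * z + (Dᴴ * D - Bᴴ * B) := by
  simp only [Matrix.conjTranspose_add, Matrix.conjTranspose_mul, Matrix.add_mul,
    Matrix.mul_add, Matrix.sub_mul, Matrix.mul_sub, Matrix.mul_assoc]
  abel

/-- If `g* I_{p,q} g = I_{p,q}` with blocks `[[A,B],[C,D]]` and `z ∈ Ω`,
then `Cz+D` is invertible, `w = (Az+B)(Cz+D)⁻¹` satisfies
`I_q − w*w = ((Cz+D)*)⁻¹ (I_q − z*z) (Cz+D)⁻¹`, and `w ∈ Ω`. -/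
theorem stmt_14 (p q : ℕ) (hq : 1 ≤ q) (hpq : q ≤ p)
    (g : Matrix (Fin p ⊕ Fin q) (Fin p ⊕ Fin q) ℂ)
    (hg : gᴴ * stmt14.Ipq p q * g = stmt14.Ipq p q)
    (z : Matrix (Fin p) (Fin q) ℂ) (hz : (1 - zᴴ * z).PosDef) :
    IsUnit (g.toBlocks₂₁ * z + g.toBlocks₂₂) ∧
    (1 - ((g.toBlocks₁₁ * z + g.toBlocks₁₂) * (g.toBlocks₂₁ * z + g.toBlocks₂₂)⁻¹)ᴴ *
        ((g.toBlocks₁₁ * z + g.toBlocks₁₂) * (g.toBlocks₂₁ * z + g.toBlocks₂₂)⁻¹) =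
      ((g.toBlocks₂₁ * z + g.toBlocks₂₂)ᴴ)⁻¹ * (1 - zᴴ * z) *
        (g.toBlocks₂₁ * z + g.toBlocks₂₂)⁻¹) ∧
    (1 - ((g.toBlocks₁₁ * z + g.toBlocks₁₂) * (g.toBlocks₂₁ * z + g.toBlocks₂₂)⁻¹)ᴴ *
        ((g.toBlocks₁₁ * z + g.toBlocks₁₂) * (g.toBlocks₂₁ * z + g.toBlocks₂₂)⁻¹)).PosDef := by
  set A := g.toBlocks₁₁ with hA
  set B := g.toBlocks₁₂ with hB
  set C := g.toBlocks₂₁ with hC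
  set D := g.toBlocks₂₂ with hD
  have hgb : g = Matrix.fromBlocks A B C D := (Matrix.fromBlocks_toBlocks g).symm
  rw [hgb, stmt14.Ipq] at hg
  clear_value A B C D
  simp only [Matrix.fromBlocks_conjTranspose, Matrix.fromBlocks_multiply] at hg
  rw [Matrix.fromBlocks_inj] at hg
  obtain ⟨h11, h12, h21, h22⟩ := hg
  simp only [Matrix.mul_zero, Matrix.zero_mul, Matrix.mul_one, Matrix.mul_neg,
    Matrix.one_mul, add_zero, zero_add, Matrix.neg_mul, neg_mul] at h11 h12 h21 h22
  -- h11 : Aᴴ*A + -(Cᴴ*C) = 1, h12 : Aᴴ*B + -(Cᴴ*D) = 0,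
  -- h21 : Bᴴ*A + -(Dᴴ*C) = 0, h22 : Bᴴ*B + -(Dᴴ*D) = -1
  have f1 : Cᴴ * C - Aᴴ * A = -1 := by rw [← h11]; abel
  have f2 : Cᴴ * D - Aᴴ * B = 0 := by
    rw [add_neg_eq_zero] at h12; rw [h12, sub_self]
  have f3 : Dᴴ * C - Bᴴ * A = 0 := by
    rw [add_neg_eq_zero] at h21; rw [h21, sub_self]
  have f4 : Dᴴ * D - Bᴴ * B = 1 := by
    rw [← sub_eq_add_neg] at h22
    rw [← neg_sub (Bᴴ * B), h22, neg_neg]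
  set M := C * z + D with hM
  set N := A * z + B with hN
  have key : Mᴴ * M - Nᴴ * N = 1 - zᴴ * z := by
    rw [hM, hN, expand_aux, f1, f2, f3, f4]
    simp only [Matrix.neg_mul, Matrix.one_mul, Matrix.mul_neg, Matrix.mul_zero,
      Matrix.zero_mul, add_zero]
    abel
  have key' : Mᴴ * M = (1 - zᴴ * z) + Nᴴ * N := by rw [← key]; abel
  have hMM : (Mᴴ * M).PosDef := by
    rw [key']; exact hz.add_posSemidef (Matrix.posSemidef_conjTranspose_mul_self N)
  have hMunit : IsUnit M := by
    have hdet : M.det ≠ 0 := by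
      intro h
      have : (Mᴴ * M).det = 0 := by rw [Matrix.det_mul, h, mul_zero]
      exact hMM.det_pos.ne' this
    exact (Matrix.isUnit_iff_isUnit_det M).mpr hdet.isUnit
  have hMHunit : IsUnit Mᴴ := by
    rwa [Matrix.isUnit_iff_isUnit_det, Matrix.det_conjTranspose, isUnit_iff_ne_zero,
      star_ne_zero, ← isUnit_iff_ne_zero, ← Matrix.isUnit_iff_isUnit_det]
  have hMinv : M * M⁻¹ = 1 := Matrix.mul_nonsing_inv M ((Matrix.isUnit_iff_isUnit_det M).mp hMunit)
  have hMHinv : (Mᴴ)⁻¹ * Mᴴ = 1 :=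
    Matrix.nonsing_inv_mul Mᴴ ((Matrix.isUnit_iff_isUnit_det Mᴴ).mp hMHunit)
  have hwH : (N * M⁻¹)ᴴ = (Mᴴ)⁻¹ * Nᴴ := by
    rw [Matrix.conjTranspose_mul, Matrix.conjTranspose_nonsing_inv]
  have heq : 1 - (N * M⁻¹)ᴴ * (N * M⁻¹) = (Mᴴ)⁻¹ * (1 - zᴴ * z) * M⁻¹ := by
    rw [hwH, ← key]
    simp only [Matrix.mul_sub, Matrix.sub_mul, Matrix.mul_assoc, hMinv, Matrix.mul_one, hMHinv]
  refine ⟨hMunit, heq, ?_⟩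
  rw [heq, ← Matrix.conjTranspose_nonsing_inv]
  exact posDef_conj_aux hz (Matrix.isUnit_nonsing_inv_iff.mpr hMunit)
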